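/- If G is a finite connected simple graph, v a vertex of G such that G − v is connected, χ(G) = χ(G − v) + 1, and G satisfies the equality χ(G)(χ(G)−1)/2 + |V(G)| − χ(G) = |E(G)|, then the degree of v in G equals χ(G − v), and G − v satisfies the equality χ(G−v)(χ(G−v)−1)/2 + |V(G−v)| − χ(G−v) = |E(G−v)|. -/
import Mathlib


open SimpleGraph

noncomputable def chi {V : Type*} (G : SimpleGraph V) : ℕ := G.chromaticNumber.toNat

universe u

lemma chi_colorable {V : Type u} [Finite V] (G : SimpleGraph V) : G.Colorable (chi G) :=
  G.colorable_chromaticNumber_of_fintype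

lemma chi_le {V : Type u} {G : SimpleGraph V} {n : ℕ} (h : G.Colorable n) : chi G ≤ n :=
  ENat.toNat_le_of_le_coe h.chromaticNumber_le

lemma one_le_chi {V : Type u} [Fintype V] [Nonempty V] (G : SimpleGraph V) : 1 ≤ chi G := by
  have h1 : (0 : ℕ∞) < G.chromaticNumber := chromaticNumber_pos G.colorable_of_fintype
  have h2 : G.chromaticNumber ≠ ⊤ :=
    chromaticNumber_ne_top_iff_exists.mpr ⟨_, G.colorable_of_fintype⟩
  have h3 : chi G ≠ 0 := by
    unfold chi
    rw [ne_eq, ENat.toNat_eq_zero]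
    push_neg
    exact ⟨h1.ne', h2⟩
  omega

lemma chi_le_card {V : Type u} [Fintype V] (G : SimpleGraph V) : chi G ≤ Fintype.card V :=
  chi_le G.colorable_of_fintype

lemma colorable_induce {V : Type u} {G : SimpleGraph V} {s : Set V} {n : ℕ}
    (h : G.Colorable n) : (G.induce s).Colorable n :=
  ⟨h.some.comp (SimpleGraph.Embedding.induce s).toHom⟩

lemma chi_induce_le {V : Type u} [Fintype V] (G : SimpleGraph V) (s : Set V) :
    chi (G.induce s) ≤ chi G :=
  chi_le (colorable_induce (chi_colorable G))

lemma colorable_succ_of_induce_compl {V : Type u} {G : SimpleGraph V} {v : V} {n : ℕ}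
    (h : (G.induce {v}ᶜ).Colorable n) : G.Colorable (n + 1) := by
  classical
  obtain ⟨C⟩ := h
  refine ⟨Coloring.mk
    (fun w => if hw : w = v then Fin.last n else (C ⟨w, by simp [hw]⟩).castSucc) ?_⟩
  intro a b hab
  have hne : a ≠ b := G.ne_of_adj hab
  by_cases ha : a = v <;> by_cases hb : b = v
  · exact absurd (ha.trans hb.symm) hne
  · simp only [dif_pos ha, dif_neg hb]
    exact (Fin.castSucc_lt_last _).ne'
  · simp only [dif_pos hb, dif_neg ha]
    exact (Fin.castSucc_lt_last _).ne
  · simp only [dif_neg ha, dif_neg hb]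
    have : (G.induce {v}ᶜ).Adj ⟨a, by simp [ha]⟩ ⟨b, by simp [hb]⟩ := hab
    exact fun hcc => C.valid this (Fin.castSucc_injective _ hcc)

lemma colorable_of_degree_lt {V : Type u} [Fintype V] {G : SimpleGraph V} {v : V} {c : ℕ}
    (hdeg : (G.neighborSet v).ncard < c) (h : (G.induce {v}ᶜ).Colorable c) : G.Colorable c := by
  classical
  obtain ⟨C⟩ := h
  have hc0 : 0 < c := Nat.pos_of_ne_zero (by rintro rfl; omega)
  set g : V → Fin c := fun w => if hw : w = v then ⟨0, hc0⟩ else C ⟨w, by simp [hw]⟩ with hg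
  set T : Set (Fin c) := g '' (G.neighborSet v) with hT
  have hTcard : T.ncard < c := lt_of_le_of_lt (Set.ncard_image_le (G.neighborSet v).toFinite) hdeg
  have hex : ∃ a : Fin c, a ∉ T := by
    by_contra hcon
    push_neg at hcon
    have : T = Set.univ := Set.eq_univ_iff_forall.mpr hcon
    rw [this, Set.ncard_univ] at hTcard
    simp at hTcard
  obtain ⟨a, ha⟩ := hex
  refine ⟨Coloring.mk (fun w => if hw : w = v then a else C ⟨w, by simp [hw]⟩) ?_⟩
  intro x y hxy
  have hne : x ≠ y := G.ne_of_adj hxy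
  by_cases hx : x = v <;> by_cases hy : y = v
  · exact absurd (hx.trans hy.symm) hne
  · simp only [dif_pos hx, dif_neg hy]
    intro hcc
    apply ha
    refine ⟨y, ?_, ?_⟩
    · rw [← hx]; exact ((G.mem_neighborSet x y).mpr hxy)
    · simp [hg, hy, hcc.symm]
  · simp only [dif_pos hy, dif_neg hx]
    intro hcc
    apply ha
    refine ⟨x, ?_, ?_⟩
    · rw [← hy]; exact ((G.mem_neighborSet y x).mpr hxy.symm)
    · simp [hg, hx, hcc.symm]
  · simp only [dif_neg hx, dif_neg hy]
    have : (G.induce {v}ᶜ).Adj ⟨x, by simp [hx]⟩ ⟨y, by simp [hy]⟩ := hxy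
    exact C.valid this

lemma reachable_induce_of_walk {V : Type u} {G : SimpleGraph V} {s : Set V} {a b : V}
    (p : G.Walk a b) (hp : ∀ x ∈ p.support, x ∈ s) (ha : a ∈ s) (hb : b ∈ s) :
    (G.induce s).Reachable ⟨a, ha⟩ ⟨b, hb⟩ := by
  induction p with
  | nil => rfl
  | @cons a x b h q ih =>
      have hx : x ∈ s := hp x (by simp)
      have h1 : (G.induce s).Adj ⟨a, ha⟩ ⟨x, hx⟩ := h
      exact h1.reachable.trans (ih (fun y hy => hp y (by simp [hy])) hx hb)

lemma exists_noncut {V : Type u} [Fintype V] (G : SimpleGraph V) (hG : G.Connected)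
    (h2 : 2 ≤ Fintype.card V) : ∃ v : V, (G.induce ({v}ᶜ : Set V)).Connected := by
  classical
  have hne : Nonempty V := hG.nonempty
  obtain ⟨u⟩ := hne
  obtain ⟨v, -, hv⟩ := Finset.exists_max_image Finset.univ (fun w => G.dist u w)
    ⟨u, Finset.mem_univ u⟩
  have hvu : v ≠ u := by
    obtain ⟨w, hw⟩ := Fintype.exists_ne_of_one_lt_card (by omega) u
    have h1 : 0 < G.dist u w := (hG u w).pos_dist_of_ne (Ne.symm hw)
    have h3 := hv w (Finset.mem_univ w)
    intro h; subst h
    rw [SimpleGraph.dist_self] at h3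
    omega
  refine ⟨v, ?_⟩
  have hune : u ∈ ({v}ᶜ : Set V) := by simp [Ne.symm hvu]
  haveI : Nonempty ({v}ᶜ : Set V) := ⟨⟨u, hune⟩⟩
  refine Connected.mk ?_
  have key : ∀ (w : V) (hw : w ∈ ({v}ᶜ : Set V)),
      (G.induce ({v}ᶜ : Set V)).Reachable ⟨u, hune⟩ ⟨w, hw⟩ := by
    intro w hw
    have hwv : w ≠ v := by simpa using hw
    obtain ⟨p, hp⟩ := (hG u w).exists_walk_length_eq_dist
    have hvsup : v ∉ p.support := by
      intro hmem
      have h1 := congrArg Walk.length (p.take_spec hmem)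
      rw [Walk.length_append] at h1
      have h2 : G.dist u v ≤ (p.takeUntil v hmem).length := dist_le _
      have h3 : 1 ≤ (p.dropUntil v hmem).length := by
        rcases Nat.eq_zero_or_pos (p.dropUntil v hmem).length with h | h
        · exact absurd (Walk.eq_of_length_eq_zero h) hwv.symm
        · exact h
      have h4 := hv w (Finset.mem_univ w)
      omega
    exact reachable_induce_of_walk p
      (fun x hx => by simp; rintro rfl; exact hvsup hx) hune hw
  rintro ⟨a, hA⟩ ⟨b, hB⟩
  exact (key a hA).symm.trans (key b hB)

lemma exists_neighbor {V : Type u} [Fintype V] {G : SimpleGraph V} (hG : G.Connected)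
    (h2 : 2 ≤ Fintype.card V) (v : V) : (G.neighborSet v).Nonempty := by
  obtain ⟨w, hw⟩ := Fintype.exists_ne_of_one_lt_card (by omega) v
  obtain ⟨p⟩ := hG v w
  cases p with
  | nil => exact absurd rfl hw
  | cons h q => exact ⟨_, h⟩

lemma edge_split {V : Type u} [Fintype V] [DecidableEq V] (G : SimpleGraph V) (v : V) :
    G.edgeSet.ncard = (G.induce ({v}ᶜ : Set V)).edgeSet.ncard + (G.neighborSet v).ncard := by
  classical
  set A : Set (Sym2 V) := {e ∈ G.edgeSet | v ∉ e} with hAdef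
  set B : Set (Sym2 V) := {e ∈ G.edgeSet | v ∈ e} with hBdef
  have hAB : A ∪ B = G.edgeSet := by
    ext e; simp only [hAdef, hBdef, Set.mem_union, Set.mem_setOf_eq]; tauto
  have hdisj : Disjoint A B := by
    rw [Set.disjoint_left]; rintro e ⟨-, he⟩ ⟨-, he'⟩; exact he he'
  have h1 : G.edgeSet.ncard = A.ncard + B.ncard := by
    rw [← hAB, Set.ncard_union_eq hdisj A.toFinite B.toFinite]
  have hB : B = (fun w => s(v, w)) '' (G.neighborSet v) := by
    ext e
    simp only [hBdef, Set.mem_setOf_eq, Set.mem_image, mem_neighborSet]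
    constructor
    · rintro ⟨he, hv⟩
      induction e with
      | _ x y =>
        rw [Sym2.mem_iff] at hv
        rw [mem_edgeSet] at he
        rcases hv with rfl | rfl
        · exact ⟨y, he, rfl⟩
        · exact ⟨x, he.symm, Sym2.eq_swap⟩
    · rintro ⟨w, hw, rfl⟩
      exact ⟨mem_edgeSet G |>.mpr hw, Sym2.mem_mk_left v w⟩
  have hBcard : B.ncard = (G.neighborSet v).ncard := by
    rw [hB]
    apply Set.ncard_image_of_injOn
    intro a _ b _ hab
    exact Sym2.congr_right.mp hab
  have hA : A = Sym2.map (Subtype.val : ({v}ᶜ : Set V) → V) ''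
      (G.induce ({v}ᶜ : Set V)).edgeSet := by
    ext e
    simp only [hAdef, Set.mem_setOf_eq, Set.mem_image]
    constructor
    · rintro ⟨he, hv⟩
      induction e with
      | _ x y =>
        rw [mem_edgeSet] at he
        have hx : x ∈ ({v}ᶜ : Set V) := by
          simp only [Set.mem_compl_iff, Set.mem_singleton_iff]
          rintro rfl; exact hv (Sym2.mem_mk_left x y)
        have hy : y ∈ ({v}ᶜ : Set V) := by
          simp only [Set.mem_compl_iff, Set.mem_singleton_iff]
          rintro rfl; exact hv (Sym2.mem_mk_right x y)
        refine ⟨s(⟨x, hx⟩, ⟨y, hy⟩), ?_, rfl⟩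
        rw [mem_edgeSet]
        exact he
    · rintro ⟨e', he', rfl⟩
      induction e' with
      | _ a b =>
        rw [mem_edgeSet] at he'
        refine ⟨(mem_edgeSet G).mpr he', ?_⟩
        intro hv
        rw [Sym2.map_pair_eq, Sym2.mem_iff] at hv
        rcases hv with h | h
        · exact a.2 h.symm
        · exact b.2 h.symm
  have hAcard : A.ncard = (G.induce ({v}ᶜ : Set V)).edgeSet.ncard := by
    rw [hA]
    exact Set.ncard_image_of_injOn (Sym2.map.injective Subtype.val_injective).injOn
  omega

lemma colorable_pred_of_not_adj {V : Type u} [Fintype V] [DecidableEq V] {G : SimpleGraph V}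
    {x y : V} (hxy : x ≠ y) (hna : ¬ G.Adj x y) : G.Colorable (Fintype.card V - 1) := by
  classical
  have C : G.Coloring {z : V // z ≠ y} := Coloring.mk
    (fun w => if hw : w = y then ⟨x, hxy⟩ else ⟨w, hw⟩) ?_
  · have hcol := C.colorable
    have hcard : Fintype.card {z : V // z ≠ y} = Fintype.card V - 1 := by
      rw [Fintype.card_subtype_compl (p := fun z => z = y)]
      simp [Fintype.card_subtype_eq]
    rwa [hcard] at hcol
  · intro a b hab
    have hne : a ≠ b := G.ne_of_adj hab
    by_cases ha : a = y <;> by_cases hb : b = y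
    · exact absurd (ha.trans hb.symm) hne
    · simp only [dif_pos ha, dif_neg hb]
      intro h
      have : x = b := congrArg Subtype.val h
      subst this
      exact hna (ha ▸ hab).symm
    · simp only [dif_pos hb, dif_neg ha]
      intro h
      have : a = x := congrArg Subtype.val h
      subst this
      exact hna (hb ▸ hab)
    · simp only [dif_neg ha, dif_neg hb]
      intro h
      exact hne (congrArg Subtype.val h)

lemma ncard_edgeSet_top {V : Type u} [Fintype V] [DecidableEq V] :
    (⊤ : SimpleGraph V).edgeSet.ncard = (Fintype.card V).choose 2 := by
  classical
  rw [← SimpleGraph.card_edgeFinset_top_eq_card_choose_two (V := V)]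
  simp [SimpleGraph.edgeFinset, Set.ncard_eq_toFinset_card']

lemma card_compl_singleton {V : Type u} [Fintype V] [DecidableEq V] (v : V) :
    Fintype.card ({v}ᶜ : Set V) = Fintype.card V - 1 := by
  rw [Fintype.card_compl_set]
  simp

lemma edge_bound (n : ℕ) : ∀ {V : Type u} [Fintype V] [DecidableEq V] (G : SimpleGraph V),
    Fintype.card V = n → G.Connected →
    (chi G).choose 2 + n ≤ G.edgeSet.ncard + chi G := by
  induction n using Nat.strong_induction_on with
  | _ n IH =>
    intro V _ _ G hcard hG
    haveI : Nonempty V := hG.nonempty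
    have hk1 : 1 ≤ chi G := one_le_chi G
    have hkn : chi G ≤ n := hcard ▸ chi_le_card G
    rcases eq_or_lt_of_le hkn with hEq | hlt
    · -- chi G = n : complete graph
      have hT : G = ⊤ := by
        by_contra hne
        have hex : ∃ x y, x ≠ y ∧ ¬ G.Adj x y := by
          by_contra hcon
          push_neg at hcon
          apply hne
          ext x y
          simp only [top_adj]
          exact ⟨fun h => G.ne_of_adj h, fun h => hcon x y h⟩
        obtain ⟨x, y, hxy, hna⟩ := hex
        have hle := chi_le (colorable_pred_of_not_adj hxy hna)
        rw [hcard] at hle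
        omega
      rw [hEq, hT, ncard_edgeSet_top, hcard]
    · -- chi G < n
      have hn2 : 2 ≤ n := by omega
      obtain ⟨v, hGv⟩ := exists_noncut G hG (hcard ▸ hn2)
      have hcard' : Fintype.card ({v}ᶜ : Set V) = n - 1 := by
        rw [card_compl_singleton, hcard]
      have IH' := IH (n - 1) (by omega) (G.induce ({v}ᶜ : Set V)) hcard' hGv
      have hsplit := edge_split G v
      have hdeg1 : 1 ≤ (G.neighborSet v).ncard :=
        (Set.ncard_pos (G.neighborSet v).toFinite).mpr (exists_neighbor hG (hcard ▸ hn2) v)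
      have hle : chi (G.induce ({v}ᶜ : Set V)) ≤ chi G := chi_induce_le G _
      have hge : chi G ≤ chi (G.induce ({v}ᶜ : Set V)) + 1 :=
        chi_le (colorable_succ_of_induce_compl (chi_colorable (G.induce ({v}ᶜ : Set V))))
      rcases (by omega : chi G = chi (G.induce ({v}ᶜ : Set V)) ∨
          chi G = chi (G.induce ({v}ᶜ : Set V)) + 1) with hcc | hcc
      · rw [hcc]
        omega
      · have hdeg : chi (G.induce ({v}ᶜ : Set V)) ≤ (G.neighborSet v).ncard := by
          by_contra hcon
          push_neg at hcon
          have := chi_le (colorable_of_degree_lt hcon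
            (chi_colorable (G.induce ({v}ᶜ : Set V))))
          omega
        have hch : (chi (G.induce ({v}ᶜ : Set V)) + 1).choose 2
            = (chi (G.induce ({v}ᶜ : Set V))).choose 2 + chi (G.induce ({v}ᶜ : Set V)) := by
          rw [Nat.choose_succ_succ, Nat.choose_one_right, Nat.add_comm]
        rw [hcc, hch]
        omega

theorem stmt3 {V : Type*} [Fintype V] [DecidableEq V] (G : SimpleGraph V) (v : V)
    (hG : G.Connected) (hGv : (G.induce {v}ᶜ).Connected)
    (hchi : chi G = chi (G.induce {v}ᶜ) + 1)
    (heq : chi G * (chi G - 1) / 2 + Fintype.card V - chi G = G.edgeSet.ncard) :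
    (G.neighborSet v).ncard = chi (G.induce {v}ᶜ) ∧
      chi (G.induce {v}ᶜ) * (chi (G.induce {v}ᶜ) - 1) / 2
        + Fintype.card ({v}ᶜ : Set V) - chi (G.induce {v}ᶜ)
        = (G.induce {v}ᶜ).edgeSet.ncard := by
  classical
  haveI : Nonempty V := hG.nonempty
  have hcard' : Fintype.card ({v}ᶜ : Set V) = Fintype.card V - 1 := card_compl_singleton v
  have hkn : chi G ≤ Fintype.card V := chi_le_card G
  have hV1 : 1 ≤ Fintype.card V := Fintype.card_pos
  have key := edge_bound (Fintype.card V - 1) (G.induce ({v}ᶜ : Set V)) hcard' hGv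
  have hsplit := edge_split G v
  have hdeg : chi (G.induce {v}ᶜ) ≤ (G.neighborSet v).ncard := by
    by_contra hcon
    push_neg at hcon
    have := chi_le (colorable_of_degree_lt hcon (chi_colorable (G.induce {v}ᶜ)))
    omega
  have hch : (chi (G.induce {v}ᶜ) + 1).choose 2
      = (chi (G.induce {v}ᶜ)).choose 2 + chi (G.induce {v}ᶜ) := by
    rw [Nat.choose_succ_succ, Nat.choose_one_right, Nat.add_comm]
  rw [← Nat.choose_two_right, hchi, hch] at heq
  rw [← Nat.choose_two_right, hcard']
  rw [hchi] at hkn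
  omega
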